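/- arXiv:2207.08694 — 2 statements merged into one kernel-verified Lean document; each statement's English description precedes it below -/
import Mathlib

section
/- Let {X_1,...,X_n} be a global frame on a smooth n-manifold N with associated teleparallel connection ∇, let {θ^1,...,θ^n} be an almost dual basis of one-forms for {X_j}, let G be a Riemannian metric on N, let Y_j be the G-gradient vector field of θ^j, and let ∇* be an affine connection that is G-dual to ∇. Then ∇*_{X_k} Y_l = 0 for all k,l = 1,...,n; that is, the gradient frame {Y_j} defining ∇ is parallel-transported by ∇* along the directions of the original frame. -/
/-! Differentiating the constant `G(X_j, Y_l) = C^l_j` along `X_k` and using `∇_{X_k} X_j = 0` gives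
`G(X_j, ∇*_{X_k} Y_l) = 0` by duality; a vector field orthogonal to a whole frame vanishes. -/

open scoped Manifold
local notation "∞" => (⊤ : ℕ∞)

noncomputable section

/-- Smooth vector fields on `N`, realized as derivations of the algebra of smooth
real-valued functions; this is the `C^∞(N)`-module `X(N)`. -/
abbrev VF {E : Type*} [NormedAddCommGroup E] [NormedSpace ℝ E] {H : Type*} [TopologicalSpace H]
    (I : ModelWithCorners ℝ E H) (N : Type*) [TopologicalSpace N] [ChartedSpace H N] :=
  Derivation ℝ C^∞⟮I, N; ℝ⟯ C^∞⟮I, N; ℝ⟯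

/-- An affine connection on `N`: a map `∇ : X(N) × X(N) → X(N)` which is ℝ-bilinear,
`C^∞(N)`-linear in the first argument, and satisfies the Leibniz rule in the second. -/
structure AffineConnection {E : Type*} [NormedAddCommGroup E] [NormedSpace ℝ E]
    {H : Type*} [TopologicalSpace H]
    (I : ModelWithCorners ℝ E H) (N : Type*) [TopologicalSpace N] [ChartedSpace H N] where
  cov : VF I N → VF I N → VF I N
  add_left : ∀ Z Z' W, cov (Z + Z') W = cov Z W + cov Z' W
  add_right : ∀ Z W W', cov Z (W + W') = cov Z W + cov Z W'
  rsmul_left : ∀ (c : ℝ) (Z W : VF I N), cov (c • Z) W = c • cov Z W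
  rsmul_right : ∀ (c : ℝ) (Z W : VF I N), cov Z (c • W) = c • cov Z W
  smul_left : ∀ (f : C^∞⟮I, N; ℝ⟯) (Z W : VF I N), cov (f • Z) W = f • cov Z W
  leibniz : ∀ (Z : VF I N) (f : C^∞⟮I, N; ℝ⟯) (W : VF I N),
    cov Z (f • W) = (Z f) • W + f • cov Z W

/-- A Riemannian metric on `N`: a symmetric, `C^∞(N)`-bilinear, pointwise nonnegative and
definite pairing of vector fields with values in smooth functions. -/
structure RiemannianMetric {E : Type*} [NormedAddCommGroup E] [NormedSpace ℝ E]
    {H : Type*} [TopologicalSpace H]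
    (I : ModelWithCorners ℝ E H) (N : Type*) [TopologicalSpace N] [ChartedSpace H N] where
  g : VF I N → VF I N → C^∞⟮I, N; ℝ⟯
  symm : ∀ Z W, g Z W = g W Z
  add_left : ∀ Z Z' W, g (Z + Z') W = g Z W + g Z' W
  smul_left : ∀ (f : C^∞⟮I, N; ℝ⟯) (Z W : VF I N), g (f • Z) W = f • g Z W
  nonneg : ∀ (Z : VF I N) (x : N), (0 : ℝ) ≤ g Z Z x
  definite : ∀ Z : VF I N, g Z Z = 0 → Z = 0

variable {E : Type*} [NormedAddCommGroup E] [NormedSpace ℝ E]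
  {H : Type*} [TopologicalSpace H]

namespace RiemannianMetric

variable {I : ModelWithCorners ℝ E H} {N : Type*} [TopologicalSpace N] [ChartedSpace H N]
  (G : RiemannianMetric I N)

def leftLinearMap (W : VF I N) : VF I N →ₗ[C^∞⟮I, N; ℝ⟯] C^∞⟮I, N; ℝ⟯ where
  toFun Z := G.g Z W
  map_add' Z Z' := G.add_left Z Z' W
  map_smul' f Z := G.smul_left f Z W

@[simp]
theorem zero_left (W : VF I N) : G.g 0 W = 0 :=
  (G.leftLinearMap W).map_zero

theorem eq_zero_of_forall_basis_left {ι : Type*} (b : Module.Basis ι C^∞⟮I, N; ℝ⟯ (VF I N))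
    {W : VF I N} (h : ∀ i, G.g (b i) W = 0) : W = 0 := by
  have hW : G.leftLinearMap W = 0 := b.ext h
  exact G.definite W (LinearMap.congr_fun hW W)

def IsDual (D D' : AffineConnection I N) : Prop :=
  ∀ Z W V : VF I N, Z (G.g W V) = G.g (D.cov Z W) V + G.g W (D'.cov Z V)

theorem g_dualCov_eq_zero_of_cov_eq_zero {D D' : AffineConnection I N} (hdual : G.IsDual D D')
    {Z W V : VF I N} (hZW : D.cov Z W = 0) {c : ℝ}
    (hWV : G.g W V = algebraMap ℝ C^∞⟮I, N; ℝ⟯ c) : G.g W (D'.cov Z V) = 0 := by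
  have h := hdual Z W V
  rw [hWV, Derivation.map_algebraMap, hZW, zero_left, zero_add] at h
  exact h.symm

end RiemannianMetric

theorem dual_connection_parallel_gradient_frame_general
    (I : ModelWithCorners ℝ E H) (N : Type*) [TopologicalSpace N] [ChartedSpace H N]
    (n : ℕ)
    (X : Module.Basis (Fin n) C^∞⟮I, N; ℝ⟯ (VF I N))
    (D : AffineConnection I N)
    (hD : ∀ j k : Fin n, D.cov (X j) (X k) = 0)
    (θ : Module.Basis (Fin n) C^∞⟮I, N; ℝ⟯ (VF I N →ₗ[C^∞⟮I, N; ℝ⟯] C^∞⟮I, N; ℝ⟯))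
    (Cmat : Fin n → Fin n → ℝ)
    (hθ : ∀ j k : Fin n, θ j (X k) = algebraMap ℝ C^∞⟮I, N; ℝ⟯ (Cmat j k))
    (G : RiemannianMetric I N)
    (Y : Fin n → VF I N)
    (hY : ∀ (k : Fin n) (Z : VF I N), θ k Z = G.g (Y k) Z)
    (D' : AffineConnection I N)
    (hdual : ∀ Z W V : VF I N,
      Z (G.g W V) = G.g (D.cov Z W) V + G.g W (D'.cov Z V)) :
    ∀ k l : Fin n, D'.cov (X k) (Y l) = 0 := by
  intro k l
  refine G.eq_zero_of_forall_basis_left X fun j => ?_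
  have hconst : G.g (X j) (Y l) = algebraMap ℝ C^∞⟮I, N; ℝ⟯ (Cmat l j) := by
    rw [G.symm, ← hY, hθ]
  exact G.g_dualCov_eq_zero_of_cov_eq_zero hdual (hD k j) hconst

/-- The gradient frame `{Y_l}` is parallel-transported by the `G`-dual connection `∇*` of the
teleparallel connection `∇` along the directions of the original frame: `∇*_{X_k} Y_l = 0`. -/
theorem dual_connection_parallel_gradient_frame
    (I : ModelWithCorners ℝ E H) (N : Type*) [TopologicalSpace N] [ChartedSpace H N]
    [IsManifold I ∞ N] [FiniteDimensional ℝ E] (n : ℕ)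
    (hdim : Module.finrank ℝ E = n)
    (X : Module.Basis (Fin n) C^∞⟮I, N; ℝ⟯ (VF I N))
    (D : AffineConnection I N)
    (hD : ∀ j k : Fin n, D.cov (X j) (X k) = 0)
    (θ : Module.Basis (Fin n) C^∞⟮I, N; ℝ⟯ (VF I N →ₗ[C^∞⟮I, N; ℝ⟯] C^∞⟮I, N; ℝ⟯))
    (Cmat : Fin n → Fin n → ℝ)
    (hθ : ∀ j k : Fin n, θ j (X k) = algebraMap ℝ C^∞⟮I, N; ℝ⟯ (Cmat j k))
    (G : RiemannianMetric I N)
    (Y : Fin n → VF I N)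
    (hY : ∀ (k : Fin n) (Z : VF I N), θ k Z = G.g (Y k) Z)
    (D' : AffineConnection I N)
    (hdual : ∀ Z W V : VF I N,
      Z (G.g W V) = G.g (D.cov Z W) V + G.g W (D'.cov Z V)) :
    ∀ k l : Fin n, D'.cov (X k) (Y l) = 0 :=
  dual_connection_parallel_gradient_frame_general I N n X D hD θ Cmat hθ G Y hY D' hdual
end
end

section
/- Let ∇ be the teleparallel connection of a global frame {X_1,...,X_n} on a Riemannian n-manifold (N,G), let {θ^j} be an almost dual coframe for {X_j}, let Y_j be the G-gradient vector field of θ^j, and let ∇* be the G-dual connection of ∇. Then ∇*_{X_j} X_k = 0 for all j,k = 1,...,n if and only if ∇_{Y_j} Y_k = 0 for all j,k = 1,...,n. -/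
open scoped Manifold
local notation "∞" => (⊤ : ℕ∞)

noncomputable section

variable {E : Type*} [NormedAddCommGroup E] [NormedSpace ℝ E]
  {H : Type*} [TopologicalSpace H]

/-
Differentiating the constant `θ^j(X_k) = G(Y_j, X_k)` along `Z` and using duality gives
`G(∇_Z Y_j, X_k) + θ^j(∇*_Z X_k) = 0`. Hence `∇*_Z X_k = 0` for all `k` iff `∇_Z Y_j = 0` for
all `j`, since `{X_k}` is a frame, `G` is nondegenerate and `{θ^j}` separates vector fields.
Both connections are `C^∞(N)`-linear in `Z`, so it suffices to take `Z` in a frame: the `X_i`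
on one side, the `Y_i` (which also form a frame) on the other.
-/

theorem Module.Basis.eq_zero_of_dual_basis_apply_eq_zero {R V ι κ : Type*} [CommRing R]
    [AddCommGroup V] [Module R V] (X : Module.Basis ι R V) (θ : Module.Basis κ R (Module.Dual R V))
    {v : V} (h : ∀ j, θ j v = 0) : v = 0 := by
  have := Module.Free.of_basis X
  refine (Module.forall_dual_apply_eq_zero_iff R v).mp fun φ => ?_
  have hev : Module.Dual.eval R V v = 0 := θ.ext fun j => by simpa using h j
  exact LinearMap.congr_fun hev φ

section Geometry

variable {I : ModelWithCorners ℝ E H} {N : Type*} [TopologicalSpace N] [ChartedSpace H N]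

namespace AffineConnection

def covLeft (D : AffineConnection I N) (W : VF I N) : VF I N →ₗ[C^∞⟮I, N; ℝ⟯] VF I N where
  toFun Z := D.cov Z W
  map_add' Z Z' := D.add_left Z Z' W
  map_smul' f Z := D.smul_left f Z W

theorem cov_eq_zero_of_mem_span (D : AffineConnection I N) {ι : Type*} {Y : ι → VF I N}
    {W Z : VF I N} (hY : ∀ m, D.cov (Y m) W = 0)
    (hZ : Z ∈ Submodule.span C^∞⟮I, N; ℝ⟯ (Set.range Y)) : D.cov Z W = 0 := by
  have hspan : Submodule.span C^∞⟮I, N; ℝ⟯ (Set.range Y) ≤ LinearMap.ker (D.covLeft W) :=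
    Submodule.span_le.mpr <| Set.range_subset_iff.mpr hY
  exact hspan hZ

end AffineConnection

namespace RiemannianMetric

def bilin (G : RiemannianMetric I N) :
    VF I N →ₗ[C^∞⟮I, N; ℝ⟯] VF I N →ₗ[C^∞⟮I, N; ℝ⟯] C^∞⟮I, N; ℝ⟯ :=
  LinearMap.mk₂ _ G.g G.add_left G.smul_left
    (fun Z W W' => by rw [G.symm, G.add_left, G.symm W, G.symm W'])
    (fun f Z W => by rw [G.symm, G.smul_left, G.symm])

@[simp] theorem bilin_apply (G : RiemannianMetric I N) (Z W : VF I N) :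
    G.bilin Z W = G.g Z W := rfl

@[simp] theorem g_zero_left (G : RiemannianMetric I N) (W : VF I N) : G.g 0 W = 0 := by
  rw [← bilin_apply, map_zero, LinearMap.zero_apply]

theorem eq_zero_of_g_basis_eq_zero (G : RiemannianMetric I N) {ι : Type*}
    (X : Module.Basis ι C^∞⟮I, N; ℝ⟯ (VF I N)) {W : VF I N} (h : ∀ k, G.g W (X k) = 0) :
    W = 0 :=
  G.definite W <|
    LinearMap.congr_fun (X.ext (f₁ := G.bilin W) (f₂ := 0) fun k => by simpa using h k) W

theorem mem_span_gradients (G : RiemannianMetric I N) {ι : Type*} [Fintype ι]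
    (θ : Module.Basis ι C^∞⟮I, N; ℝ⟯ (VF I N →ₗ[C^∞⟮I, N; ℝ⟯] C^∞⟮I, N; ℝ⟯))
    {Y : ι → VF I N} (hY : ∀ k Z, θ k Z = G.g (Y k) Z) (Z : VF I N) :
    Z ∈ Submodule.span C^∞⟮I, N; ℝ⟯ (Set.range Y) := by
  set c := θ.repr (G.bilin Z)
  have hforms : G.bilin (∑ m, c m • Y m) = G.bilin Z := by
    rw [← θ.sum_repr (G.bilin Z), map_sum]
    refine Finset.sum_congr rfl fun m _ => ?_
    rw [map_smul]
    congr 1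
    exact LinearMap.ext fun V => (hY m V).symm
  have hZ : Z = ∑ m, c m • Y m := by
    refine (sub_eq_zero.mp <| G.definite _ ?_).symm
    have := LinearMap.congr_fun (sub_eq_zero.mpr hforms) (∑ m, c m • Y m - Z)
    rwa [← map_sub] at this
  exact hZ ▸ Submodule.sum_mem _ fun m _ => Submodule.smul_mem _ _ (Submodule.subset_span ⟨m, rfl⟩)

end RiemannianMetric

theorem g_cov_gradient_add_coframe_dual_cov {ι : Type*} {X : ι → VF I N}
    {θ : ι → VF I N →ₗ[C^∞⟮I, N; ℝ⟯] C^∞⟮I, N; ℝ⟯} {Cmat : ι → ι → ℝ}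
    (hθ : ∀ j k, θ j (X k) = algebraMap ℝ C^∞⟮I, N; ℝ⟯ (Cmat j k))
    {G : RiemannianMetric I N} {Y : ι → VF I N} (hY : ∀ k Z, θ k Z = G.g (Y k) Z)
    {D D' : AffineConnection I N}
    (hdual : ∀ Z W V : VF I N, Z (G.g W V) = G.g (D.cov Z W) V + G.g W (D'.cov Z V))
    (Z : VF I N) (j k : ι) :
    G.g (D.cov Z (Y j)) (X k) + θ j (D'.cov Z (X k)) = 0 := by
  rw [hY, ← hdual, ← hY, hθ, Derivation.map_algebraMap]

end Geometry

theorem dual_parallel_iff_parallel_general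
    (I : ModelWithCorners ℝ E H) (N : Type*) [TopologicalSpace N] [ChartedSpace H N]
    (n : ℕ)
    (X : Module.Basis (Fin n) C^∞⟮I, N; ℝ⟯ (VF I N))
    (D : AffineConnection I N)
    (θ : Module.Basis (Fin n) C^∞⟮I, N; ℝ⟯ (VF I N →ₗ[C^∞⟮I, N; ℝ⟯] C^∞⟮I, N; ℝ⟯))
    (Cmat : Fin n → Fin n → ℝ)
    (hθ : ∀ j k : Fin n, θ j (X k) = algebraMap ℝ C^∞⟮I, N; ℝ⟯ (Cmat j k))
    (G : RiemannianMetric I N)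
    (Y : Fin n → VF I N)
    (hY : ∀ (k : Fin n) (Z : VF I N), θ k Z = G.g (Y k) Z)
    (D' : AffineConnection I N)
    (hdual : ∀ Z W V : VF I N,
      Z (G.g W V) = G.g (D.cov Z W) V + G.g W (D'.cov Z V)) :
    (∀ j k : Fin n, D'.cov (X j) (X k) = 0) ↔ (∀ j k : Fin n, D.cov (Y j) (Y k) = 0) := by
  have key := g_cov_gradient_add_coframe_dual_cov hθ hY hdual
  constructor
  · intro h j k
    have hX : ∀ i, D.cov (X i) (Y k) = 0 := fun i =>
      G.eq_zero_of_g_basis_eq_zero X fun l => by simpa [h i l] using key (X i) k l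
    exact D.cov_eq_zero_of_mem_span hX (by simp [X.span_eq])
  · intro h j k
    have hY' : ∀ m, D'.cov (Y m) (X k) = 0 := fun m =>
      X.eq_zero_of_dual_basis_apply_eq_zero θ fun i => by simpa [h m i] using key (Y m) i k
    exact D'.cov_eq_zero_of_mem_span hY' (G.mem_span_gradients θ hY (X j))

/-- For the teleparallel connection `∇` of a frame `{X_j}`, its `G`-dual connection `∇*`, and
the `G`-gradient frame `{Y_j}` of an almost dual coframe `{θ^j}`, one has
`∇*_{X_j} X_k = 0` for all `j, k` iff `∇_{Y_j} Y_k = 0` for all `j, k`. -/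
theorem dual_parallel_iff_parallel
    (I : ModelWithCorners ℝ E H) (N : Type*) [TopologicalSpace N] [ChartedSpace H N]
    [IsManifold I (⊤ : ℕ∞) N] [FiniteDimensional ℝ E] (n : ℕ)
    (hdim : Module.finrank ℝ E = n)
    (X : Module.Basis (Fin n) C^∞⟮I, N; ℝ⟯ (VF I N))
    (D : AffineConnection I N)
    (hD : ∀ j k : Fin n, D.cov (X j) (X k) = 0)
    (θ : Module.Basis (Fin n) C^∞⟮I, N; ℝ⟯ (VF I N →ₗ[C^∞⟮I, N; ℝ⟯] C^∞⟮I, N; ℝ⟯))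
    (Cmat : Fin n → Fin n → ℝ)
    (hθ : ∀ j k : Fin n, θ j (X k) = algebraMap ℝ C^∞⟮I, N; ℝ⟯ (Cmat j k))
    (G : RiemannianMetric I N)
    (Y : Fin n → VF I N)
    (hY : ∀ (k : Fin n) (Z : VF I N), θ k Z = G.g (Y k) Z)
    (D' : AffineConnection I N)
    (hdual : ∀ Z W V : VF I N,
      Z (G.g W V) = G.g (D.cov Z W) V + G.g W (D'.cov Z V)) :
    (∀ j k : Fin n, D'.cov (X j) (X k) = 0) ↔ (∀ j k : Fin n, D.cov (Y j) (Y k) = 0) :=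
  dual_parallel_iff_parallel_general I N n X D θ Cmat hθ G Y hY D' hdual
end
end
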